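/- For any integers m ≥ 1 and n ≥ 1, the sum over all complete (m+1)-ary trees T with n internal vertices of the product over all internal vertices v of T of ((m·h_v + 1)x − h_v + 1)/((m+1)·h_v) equals (1/(mn+1)) · C((mn+1)x, n), as an identity of polynomials in x over ℚ, where h_v denotes the number of internal vertices of the subtree of T rooted at v. -/

import Mathlib

/-!
Specialise `x` to a nonzero rational `t` and let `F n` be the left-hand side. Splitting a tree at
its root gives `F (n + 1) = w (n + 1) * ∑_{k₀ + ⋯ + kₘ = n} ∏ F kᵢ`, where
`w h = ((m h + 1) t - h + 1) / ((m + 1) h)`. Rothe's coefficients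
`A_k(x) = x / (x + k z) * C(x + k z, k)` satisfy the convolution
`∑_{i+j=n} A_i(x) A_j(y) = A_n(x + y)`, so for `z = m t` the numbers
`A_n(t) = C((m n + 1) t, n) / (m n + 1)` obey the same recurrence, because
`A_{n+1}(t) = w (n + 1) * A_n((m + 1) t)`. For fixed `y` and `z`, the two sides of the convolution
differ by a polynomial in `x` that vanishes at `0` and, by Pascal's rule and induction on `n`, is
invariant under `x ↦ x + 1`; hence it vanishes.
-/

open Polynomial Finset

/-- A complete `m`-ary tree: a `leaf` is an external vertex and a `node`
has exactly `m` linearly ordered subtrees. -/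
inductive MTree (m : ℕ) : Type
  | leaf : MTree m
  | node : (Fin m → MTree m) → MTree m

namespace MTree

/-- The number of internal vertices of a complete `m`-ary tree. -/
def internals {m : ℕ} : MTree m → ℕ
  | leaf => 0
  | node c => 1 + ∑ i, (c i).internals

/-- The first kind of hook length of the root of `node c`: one plus the number of
internal vertices of all subtrees except the rightmost one. -/
def hook1 {m : ℕ} (c : Fin m → MTree m) : ℕ :=
  1 + ∑ i ∈ Finset.univ.filter (fun i : Fin m => (i : ℕ) + 1 < m), (c i).internals

/-- The product of `f (𝓗_v)` over all internal vertices `v` of a complete `m`-ary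
tree, where `𝓗_v` is the first kind of hook length. -/
def hookProd1 {m : ℕ} {R : Type*} [CommSemiring R] (f : ℕ → R) : MTree m → R
  | leaf => 1
  | node c => f (hook1 c) * ∏ i, hookProd1 f (c i)

/-- The number of internal vertices of the `(m+1-|S|)`-ary tree `T^S` obtained from a
complete `(m+1)`-ary tree `T` by recursively deleting, for every `r ∈ S ⊆ [m]`,
the `r`-th subtree of every remaining internal vertex (the label `r ∈ {1,…,m}`
corresponds to the child with index `r - 1`, i.e. to `Fin.castSucc` of `Fin m`). -/
def internalsS {m : ℕ} (S : Finset (Fin m)) : MTree (m + 1) → ℕ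
  | leaf => 0
  | node c => 1 + ∑ i ∈ (S.image Fin.castSucc)ᶜ, internalsS S (c i)

/-- The product of `f (ℍ_v^S)` over all internal vertices `v` of a complete
`(m+1)`-ary tree, where `ℍ_v^S` is the second kind of hook length. -/
def hookProdS {m : ℕ} {R : Type*} [CommSemiring R] (S : Finset (Fin m)) (f : ℕ → R) :
    MTree (m + 1) → R
  | leaf => 1
  | node c => f (internalsS S (node c)) * ∏ i, hookProdS S f (c i)

end MTree

namespace Ring

variable {R : Type*} [CommRing R] [BinomialRing R]

theorem succ_mul_choose_succ (r : R) (k : ℕ) :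
    ((k : R) + 1) * choose r (k + 1) = r * choose (r - 1) k := by
  have h := choose_smul_choose r (Nat.le_add_left 1 k)
  rwa [Nat.choose_one_right, choose_one_right, Nat.add_sub_cancel, nsmul_eq_mul,
    Nat.cast_succ, Nat.cast_one] at h

theorem choose_succ_right_eq (r : R) (k : ℕ) :
    choose r (k + 1) * ((k : R) + 1) = choose r k * (r - k) := by
  cases k with
  | zero => simp
  | succ k =>
    have pascal := choose_succ_succ (r - 1) k
    rw [sub_add_cancel] at pascal
    have h1 := succ_mul_choose_succ r (k + 1)
    have h2 := succ_mul_choose_succ r k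
    push_cast at h1 ⊢
    linear_combination h1 - r * pascal + h2

theorem choose_eq_inv_factorial_mul_prod {K : Type*} [Field K] [CharZero K] (a : K) (n : ℕ) :
    choose a n = (n.factorial : K)⁻¹ * ∏ j ∈ range n, (a - j) := by
  rw [choose_eq_smul, smul_eq_mul, ← descPochhammer_eval_eq_prod_range, ← aeval_eq_smeval,
    aeval_def, eval₂_eq_eval_map, descPochhammer_map]

end Ring

section Rothe

variable {R S : Type*} [CommRing R] [BinomialRing R] [CommRing S] [BinomialRing S]

/-- Rothe's coefficient `x / (x + k z) * choose (x + k z) k`, written without division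
(see `add_mul_rotheCoeff`). -/
noncomputable def rotheCoeff (z x : R) : ℕ → R
  | 0 => 1
  | k + 1 => Ring.choose (x + (k + 1) * z) (k + 1) - z * Ring.choose (x + (k + 1) * z - 1) k

@[simp]
theorem rotheCoeff_zero (z x : R) : rotheCoeff z x 0 = 1 := rfl

theorem map_rotheCoeff {F : Type*} [FunLike F R S] [RingHomClass F R S] (φ : F) (z x : R)
    (k : ℕ) : φ (rotheCoeff z x k) = rotheCoeff (φ z) (φ x) k := by
  cases k <;> simp [rotheCoeff, Ring.map_choose]

theorem succ_mul_rotheCoeff_succ (z x : R) (k : ℕ) :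
    ((k : R) + 1) * rotheCoeff z x (k + 1) = x * Ring.choose (x + (k + 1) * z - 1) k := by
  rw [rotheCoeff, mul_sub, Ring.succ_mul_choose_succ]
  ring

theorem add_mul_rotheCoeff (z x : R) (k : ℕ) :
    (x + k * z) * rotheCoeff z x k = x * Ring.choose (x + k * z) k := by
  cases k with
  | zero => simp
  | succ k =>
    have h := Ring.succ_mul_choose_succ (x + (k + 1) * z) k
    rw [rotheCoeff]
    push_cast
    linear_combination z * h

theorem rotheCoeff_zero_left (z : R) (k : ℕ) : rotheCoeff z 0 (k + 1) = 0 := by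
  have := BinomialRing.toIsAddTorsionFree (R := R)
  apply nsmul_right_injective (Nat.succ_ne_zero k)
  simpa [nsmul_eq_mul] using succ_mul_rotheCoeff_succ z 0 k

theorem rotheCoeff_add_one_sub (z x : R) (k : ℕ) :
    rotheCoeff z (x + 1) (k + 1) - rotheCoeff z x (k + 1) = rotheCoeff z (x + z) k := by
  cases k with
  | zero => simp [rotheCoeff]
  | succ k =>
    set a := x + (k + 2) * z
    have pascal := Ring.choose_succ_succ a (k + 1)
    have pascal' := Ring.choose_succ_succ (a - 1) k
    rw [sub_add_cancel] at pascal'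
    simp only [rotheCoeff]
    push_cast
    rw [show x + 1 + (k + 1 + 1) * z = a + 1 by ring, show x + (k + 1 + 1) * z = a by ring,
      show x + z + (k + 1) * z = a by ring, add_sub_cancel_right]
    linear_combination pascal - z * pascal'

theorem succ_mul_add_mul_rotheCoeff_succ (z x : R) (n : ℕ) :
    ((n : R) + 1) * (x + z) * rotheCoeff z x (n + 1) =
      x * (x + (n + 1) * z - n) * rotheCoeff z (x + z) n := by
  cases n with
  | zero => simp [rotheCoeff]; ring
  | succ k =>
    have := BinomialRing.toIsAddTorsionFree (R := R)
    apply nsmul_right_injective (Nat.succ_ne_zero k)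
    have h1 := succ_mul_rotheCoeff_succ z x (k + 1)
    have h2 := succ_mul_rotheCoeff_succ z (x + z) k
    have h3 := Ring.choose_succ_right_eq (x + (k + 2) * z - 1) k
    push_cast at h1 h2
    rw [show x + z + (k + 1) * z - 1 = x + (k + 2) * z - 1 by ring] at h2
    rw [show x + (k + 1 + 1) * z - 1 = x + (k + 2) * z - 1 by ring] at h1
    simp only [nsmul_eq_mul]
    push_cast
    linear_combination (k + 1) * (x + z) * h1 - x * (x + (k + 2) * z - (k + 1)) * h2 +
      x * (x + z) * h3

end Rothe

theorem Finset.Nat.sum_antidiagonalTuple_succ {M : Type*} [AddCommMonoid M] (k n : ℕ)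
    (f : (Fin (k + 1) → ℕ) → M) :
    ∑ x ∈ Nat.antidiagonalTuple (k + 1) n, f x =
      ∑ p ∈ antidiagonal n, ∑ x ∈ Nat.antidiagonalTuple k p.2, f (Fin.cons p.1 x) := by
  simp only [Finset.sum_eq_multiset_sum]
  change ((List.Nat.antidiagonalTuple (k + 1) n : Multiset _).map f).sum =
    ((List.Nat.antidiagonal n : Multiset (ℕ × ℕ)).map fun p : ℕ × ℕ =>
      ((List.Nat.antidiagonalTuple k p.2 : Multiset _).map fun x => f (Fin.cons p.1 x)).sum).sum
  simp only [List.Nat.antidiagonalTuple, List.flatMap, Multiset.map_coe, List.map_flatten,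
    List.map_map, Function.comp_def, Multiset.sum_coe, List.sum_flatten]

theorem Polynomial.eq_zero_of_eval_add_one {R : Type*} [CommRing R] [IsDomain R] [CharZero R]
    (p : R[X]) (hp : ∀ t, p.eval (t + 1) = p.eval t) (h0 : p.eval 0 = 0) : p = 0 := by
  have hnat (n : ℕ) : p.IsRoot n := by
    induction n with
    | zero => simpa using h0
    | succ n ih => simpa [IsRoot, hp] using ih
  exact p.eq_zero_of_infinite_isRoot
    (Set.infinite_of_injective_forall_mem Nat.cast_injective hnat)

section RotheField

variable {K : Type*} [Field K] [CharZero K]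

@[simp]
theorem eval_rotheCoeff (z x : K[X]) (k : ℕ) (t : K) :
    (rotheCoeff z x k).eval t = rotheCoeff (z.eval t) (x.eval t) k :=
  map_rotheCoeff (evalRingHom t) z x k

theorem sum_antidiagonal_rotheCoeff_mul (z y : K) (n : ℕ) (x : K) :
    ∑ p ∈ antidiagonal n, rotheCoeff z x p.1 * rotheCoeff z y p.2 = rotheCoeff z (x + y) n := by
  induction n generalizing x with
  | zero => simp
  | succ n ih =>
    let D (x : K) := ∑ p ∈ antidiagonal (n + 1), rotheCoeff z x p.1 * rotheCoeff z y p.2 -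
      rotheCoeff z (x + y) (n + 1)
    have hD (x : K) : D (x + 1) = D x := by
      have hdiff := rotheCoeff_add_one_sub z (x + y) n
      have hsum : ∑ p ∈ antidiagonal n, rotheCoeff z (x + 1) (p.1 + 1) * rotheCoeff z y p.2 -
          ∑ p ∈ antidiagonal n, rotheCoeff z x (p.1 + 1) * rotheCoeff z y p.2 =
          rotheCoeff z (x + y + z) n := by
        rw [← sum_sub_distrib, add_right_comm, ← ih (x + z)]
        refine sum_congr rfl fun p _ => ?_
        rw [← rotheCoeff_add_one_sub, sub_mul]
      simp only [D, Finset.Nat.sum_antidiagonal_succ, rotheCoeff_zero, one_mul]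
      rw [add_right_comm x 1 y]
      linear_combination hsum - hdiff
    have h0 : D 0 = 0 := by
      simp [D, Finset.Nat.sum_antidiagonal_succ, rotheCoeff_zero_left]
    let p : K[X] :=
      ∑ q ∈ antidiagonal (n + 1), rotheCoeff (C z) X q.1 * C (rotheCoeff z y q.2) -
        rotheCoeff (C z) (X + C y) (n + 1)
    have hp (t : K) : p.eval t = D t := by simp [p, D, eval_finsetSum]
    have hp0 : p = 0 := p.eq_zero_of_eval_add_one (by simpa [hp] using hD) (by rw [hp, h0])
    simpa [hp0, D, sub_eq_zero] using (hp x).symm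

theorem sum_antidiagonalTuple_prod_rotheCoeff (z x : K) (s n : ℕ) :
    ∑ k ∈ Nat.antidiagonalTuple s n, ∏ i, rotheCoeff z x (k i) = rotheCoeff z (s * x) n := by
  induction s generalizing n with
  | zero => cases n <;> simp [rotheCoeff_zero_left]
  | succ s ih =>
    simp only [Finset.Nat.sum_antidiagonalTuple_succ, Fin.prod_univ_succ, Fin.cons_zero,
      Fin.cons_succ, ← mul_sum, ih]
    rw [sum_antidiagonal_rotheCoeff_mul]
    push_cast
    ring_nf

theorem mul_rotheCoeff_mul_self (c x : K) (hx : x ≠ 0) (n : ℕ) :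
    (c * n + 1) * rotheCoeff (c * x) x n = Ring.choose ((c * n + 1) * x) n := by
  have h := add_mul_rotheCoeff (c * x) x n
  rw [show x + n * (c * x) = (c * n + 1) * x by ring] at h
  exact mul_left_cancel₀ hx (by linear_combination h)

end RotheField

namespace MTree

variable {m : ℕ}

theorem internals_eq_zero_iff {T : MTree m} : T.internals = 0 ↔ T = leaf := by
  cases T <;> simp [internals]

theorem finite_setOf_internals_le (m n : ℕ) : {T : MTree m | T.internals ≤ n}.Finite := by
  induction n with
  | zero => simp [internals_eq_zero_iff]
  | succ n ih =>
    refine ((Set.Finite.pi fun _ : Fin m => ih).image node).insert leaf |>.subset ?_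
    rintro (_ | c) hc
    · exact Set.mem_insert _ _
    · refine Set.mem_insert_of_mem _ ⟨c, fun i _ => ?_, rfl⟩
      have := single_le_sum (fun j _ => Nat.zero_le (c j).internals) (mem_univ i)
      simp only [Set.mem_ofPred_eq, internals] at hc ⊢
      omega

theorem finite_setOf_internals_eq (m n : ℕ) : {T : MTree m | T.internals = n}.Finite :=
  (finite_setOf_internals_le m n).subset fun _ => le_of_eq

noncomputable def withInternals (m n : ℕ) : Finset (MTree m) :=
  (finite_setOf_internals_eq m n).toFinset

@[simp]
theorem mem_withInternals {n : ℕ} {T : MTree m} : T ∈ withInternals m n ↔ T.internals = n :=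
  Set.Finite.mem_toFinset _

theorem withInternals_zero : withInternals m 0 = {leaf} := by
  ext T
  simp [internals_eq_zero_iff]

theorem sum_withInternals_succ {M : Type*} [AddCommMonoid M] (g : MTree m → M) (n : ℕ) :
    ∑ T ∈ withInternals m (n + 1), g T = ∑ k ∈ Nat.antidiagonalTuple m n,
      ∑ c ∈ Fintype.piFinset fun i => withInternals m (k i), g (node c) := by
  have hdisj : (Nat.antidiagonalTuple m n : Set (Fin m → ℕ)).PairwiseDisjoint
      fun k => Fintype.piFinset fun i => withInternals m (k i) := by
    intro k _ k' _ hne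
    refine disjoint_left.2 fun c hc hc' => hne (funext fun i => ?_)
    simp only [Fintype.mem_piFinset, mem_withInternals] at hc hc'
    rw [← hc, hc']
  have hsplit : withInternals m (n + 1) = ((Nat.antidiagonalTuple m n).disjiUnion _ hdisj).map
      ⟨node, fun _ _ => node.inj⟩ := by
    ext (_ | c)
    · simp [internals]
    · simp only [mem_withInternals, internals, add_comm 1, Nat.add_right_cancel_iff, mem_map,
        mem_disjiUnion, Nat.mem_antidiagonalTuple, Fintype.mem_piFinset]
      constructor
      · exact fun h => ⟨c, ⟨_, h, fun _ => rfl⟩, rfl⟩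
      · rintro ⟨c', ⟨k, rfl, hk⟩, h⟩
        obtain rfl : c' = c := node.inj h
        exact sum_congr rfl fun i _ => hk i
  rw [hsplit, sum_map, sum_disjiUnion]
  rfl

variable {R S : Type*} [CommSemiring R] [CommSemiring S]

theorem internalsS_empty (T : MTree (m + 1)) :
    internalsS (∅ : Finset (Fin m)) T = T.internals := by
  induction T with
  | leaf => rfl
  | node c ih => simp [internalsS, internals, ih]

theorem map_hookProdS (φ : R →+* S) (s : Finset (Fin m)) (f : ℕ → R) (T : MTree (m + 1)) :
    φ (hookProdS s f T) = hookProdS s (φ ∘ f) T := by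
  induction T with
  | leaf => simp [hookProdS]
  | node c ih => simp [hookProdS, ih]

variable (m) in
noncomputable def sumHookProd (f : ℕ → R) (n : ℕ) : R :=
  ∑ T ∈ withInternals (m + 1) n, hookProdS (∅ : Finset (Fin m)) f T

theorem sumHookProd_zero (f : ℕ → R) : sumHookProd m f 0 = 1 := by
  simp [sumHookProd, withInternals_zero, hookProdS]

theorem sumHookProd_succ (f : ℕ → R) (n : ℕ) :
    sumHookProd m f (n + 1) =
      f (n + 1) * ∑ k ∈ Nat.antidiagonalTuple (m + 1) n, ∏ i, sumHookProd m f (k i) := by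
  rw [sumHookProd, sum_withInternals_succ, mul_sum]
  refine sum_congr rfl fun k hk => ?_
  simp only [sumHookProd]
  rw [prod_univ_sum, mul_sum]
  refine sum_congr rfl fun c hc => ?_
  rw [Nat.mem_antidiagonalTuple] at hk
  simp only [Fintype.mem_piFinset, mem_withInternals] at hc
  simp [hookProdS, internalsS_empty, internals, hc, hk, add_comm 1]

theorem map_sumHookProd (φ : R →+* S) (f : ℕ → R) (n : ℕ) :
    φ (sumHookProd m f n) = sumHookProd m (φ ∘ f) n := by
  simp [sumHookProd, map_hookProdS]

theorem sumHookProd_eq_rotheCoeff {K : Type*} [Field K] [CharZero K] (m : ℕ) {t : K}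
    (ht : t ≠ 0) (n : ℕ) :
    sumHookProd m (fun h => (((m : K) + 1) * h)⁻¹ * (((m : K) * h + 1) * t - (h - 1))) n =
      rotheCoeff (m * t) t n := by
  induction n using Nat.strong_induction_on with | _ n ih => ?_
  cases n with
  | zero => simp [sumHookProd_zero]
  | succ n =>
    have hchildren : ∀ k ∈ Nat.antidiagonalTuple (m + 1) n, ∀ i, k i < n + 1 := by
      intro k hk i
      have := single_le_sum (fun j _ => Nat.zero_le (k j)) (mem_univ i)
      rw [Nat.mem_antidiagonalTuple] at hk
      omega
    rw [sumHookProd_succ, sum_congr rfl fun k hk => prod_congr rfl fun i _ =>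
      ih _ (hchildren k hk i), sum_antidiagonalTuple_prod_rotheCoeff]
    have key := succ_mul_add_mul_rotheCoeff_succ (m * t) t n
    have hm : (m : K) + 1 ≠ 0 := Nat.cast_add_one_ne_zero m
    have hn : (n : K) + 1 ≠ 0 := Nat.cast_add_one_ne_zero n
    have hden : ((n : K) + 1) * (t + m * t) ≠ 0 := by
      rw [show t + m * t = ((m : K) + 1) * t by ring]
      exact mul_ne_zero hn (mul_ne_zero hm ht)
    rw [show ((m + 1 : ℕ) : K) * t = t + m * t by push_cast; ring, eq_comm]
    apply mul_left_cancel₀ hden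
    rw [key]
    push_cast
    field_simp
    ring

end MTree

theorem du_liu_hook_length_formula'_general (m n : ℕ) :
    (∑ᶠ T ∈ {T : MTree (m + 1) | T.internals = n},
        MTree.hookProdS (∅ : Finset (Fin m)) (fun h =>
          C ((((m : ℚ) + 1) * (h : ℚ))⁻¹) *
            (C ((m : ℚ) * (h : ℚ) + 1) * (X : ℚ[X]) - C ((h : ℚ) - 1))) T)
      = C (((m : ℚ) * n + 1)⁻¹ * (n.factorial : ℚ)⁻¹) *
          ∏ j ∈ Finset.range n,
            (C ((m : ℚ) * n + 1) * (X : ℚ[X]) - C (j : ℚ)) := by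
  rw [← (MTree.finite_setOf_internals_eq (m + 1) n).coe_toFinset, finsum_mem_coe_finset]
  change MTree.sumHookProd m _ n = _
  refine eq_of_infinite_eval_eq _ _ ((Set.finite_singleton 0).infinite_compl.mono fun t ht => ?_)
  change eval t _ = eval t _
  rw [← coe_evalRingHom, MTree.map_sumHookProd, coe_evalRingHom]
  have hmn : (m : ℚ) * n + 1 ≠ 0 := by positivity
  have h := mul_rotheCoeff_mul_self (m : ℚ) t ht n
  rw [Ring.choose_eq_inv_factorial_mul_prod] at h
  convert MTree.sumHookProd_eq_rotheCoeff m ht n using 1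
  · simp [Function.comp_def]
  · simp only [map_mul, map_add, map_natCast, map_one, eval_mul, eval_C, eval_prod, eval_sub,
      eval_add, eval_natCast, eval_one, eval_X]
    rw [mul_assoc, ← h, inv_mul_cancel_left₀ hmn]

/-- **Du–Liu hook length formula for `(m+1)`-ary trees, second form.**
For `m ≥ 1` and `n ≥ 1`,
`∑_{T ∈ 𝒯_{n,m+1}} ∏_{v} ((m h_v + 1)x - h_v + 1)/((m+1) h_v)
  = (1/(mn+1)) ⬝ C((mn+1)x, n)` in `ℚ[x]`, where `h_v` is the number of internal
vertices of the subtree rooted at `v` (the case `S = ∅` of the second kind of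
hook length) and `C(y,n) = y(y-1)⋯(y-n+1)/n!`. -/
theorem du_liu_hook_length_formula' (m n : ℕ) (hm : 1 ≤ m) (hn : 1 ≤ n) :
    (∑ᶠ T ∈ {T : MTree (m + 1) | T.internals = n},
        MTree.hookProdS (∅ : Finset (Fin m)) (fun h =>
          C ((((m : ℚ) + 1) * (h : ℚ))⁻¹) *
            (C ((m : ℚ) * (h : ℚ) + 1) * (X : ℚ[X]) - C ((h : ℚ) - 1))) T)
      = C (((m : ℚ) * n + 1)⁻¹ * (n.factorial : ℚ)⁻¹) *
          ∏ j ∈ Finset.range n,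
            (C ((m : ℚ) * n + 1) * (X : ℚ[X]) - C (j : ℚ)) :=
  du_liu_hook_length_formula'_general m n
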